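/- arXiv:1202.5014 — 2 statements merged into one kernel-verified Lean document; each statement's English description precedes it below -/
import Mathlib

section
/- Claim 1: Let W₁, W₂, X₁^N, V₁^N, V₂^N, Y₁^N, Ỹ₁^N be finite random variables such that X₁ᵢ (and hence V₁ᵢ) is a deterministic function of (W₁, Ỹ₁^{i−1}), Y₁^N is determined by (W₁, Ỹ₁^N) up to V₂^N (formally H(Y₁^N | W₁, Ỹ₁^N) = H(V₂^N | W₁, Ỹ₁^N)), and V₁^N is a deterministic function of (W₁, Ỹ₁^{N−1}). Then I(V₁^N; W₂) + H(V₂^N | W₁) − H(Y₁^N | W₁) − H(V₁^N | Y₁^N) ≤ H(Ỹ₁^N | W₁). -/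
/-
Only Shannon-type inequalities are needed. Independence of `W₁` and `W₂` gives
`I(V₁;W₂) ≤ H(V₁|W₁)`; conditioning on `W₁` as well lowers `H(V₁|Y₁)` to `H(V₁|W₁,Y₁)`;
the chain rule and the hypothesis on `Y₁` give `H(V₂|W₁) ≤ H(Ỹ₁|W₁) + H(Y₁|W₁,Ỹ₁)`; and since
`V₁` is a function of `(W₁,Ỹ₁)`, data processing gives `I(V₁;Y₁|W₁) ≤ I(Ỹ₁;Y₁|W₁)`.
Adding the four inequalities gives the claim. The one non-elementary ingredient, submodularity
of entropy, is Gibbs' inequality against the weights `p(x,z) p(y,z) / p(z)`.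
-/

open Finset

/-- Probability mass of the event `X = x` under the pmf `p` on a finite sample space. -/
noncomputable def pmass {Ω S : Type*} [Fintype Ω] [DecidableEq S]
    (p : Ω → ℝ) (X : Ω → S) (x : S) : ℝ :=
  ∑ ω, if X ω = x then p ω else 0

/-- Shannon entropy (in bits) of a finitely valued random variable. -/
noncomputable def ent {Ω S : Type*} [Fintype Ω] [Fintype S] [DecidableEq S]
    (p : Ω → ℝ) (X : Ω → S) : ℝ :=
  -∑ x : S, pmass p X x * Real.logb 2 (pmass p X x)

/-- Conditional Shannon entropy H(X | Y) = H(X, Y) − H(Y), in bits. -/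
noncomputable def condEnt {Ω S T : Type*} [Fintype Ω] [Fintype S] [Fintype T]
    [DecidableEq S] [DecidableEq T] (p : Ω → ℝ) (X : Ω → S) (Y : Ω → T) : ℝ :=
  ent p (fun ω => (X ω, Y ω)) - ent p Y

/-- Mutual information I(X; Y) = H(X) + H(Y) − H(X, Y), in bits. -/
noncomputable def mutInfo {Ω S T : Type*} [Fintype Ω] [Fintype S] [Fintype T]
    [DecidableEq S] [DecidableEq T] (p : Ω → ℝ) (X : Ω → S) (Y : Ω → T) : ℝ :=
  ent p X + ent p Y - ent p (fun ω => (X ω, Y ω))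

/-- Conditional mutual information I(X; Y | Z), in bits. -/
noncomputable def condMutInfo {Ω S T U : Type*} [Fintype Ω] [Fintype S] [Fintype T] [Fintype U]
    [DecidableEq S] [DecidableEq T] [DecidableEq U]
    (p : Ω → ℝ) (X : Ω → S) (Y : Ω → T) (Z : Ω → U) : ℝ :=
  condEnt p X Z + condEnt p Y Z - condEnt p (fun ω => (X ω, Y ω)) Z

/-- Two random variables are independent under the pmf `p`. -/
def IndepRV {Ω S T : Type*} [Fintype Ω] [DecidableEq S] [DecidableEq T]
    (p : Ω → ℝ) (X : Ω → S) (Y : Ω → T) : Prop :=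
  ∀ x y, pmass p (fun ω => (X ω, Y ω)) (x, y) = pmass p X x * pmass p Y y

section Entropy

variable {Ω S T U : Type*} [Fintype Ω] (p : Ω → ℝ)

lemma sum_pmass_mul [Fintype S] [DecidableEq S] (X : Ω → S) (φ : S → ℝ) :
    ∑ s, pmass p X s * φ s = ∑ ω, p ω * φ (X ω) := by
  simp only [pmass, Finset.sum_mul, ite_mul, zero_mul]
  rw [Finset.sum_comm]
  simp

lemma sum_pmass [Fintype S] [DecidableEq S] (X : Ω → S) :
    ∑ s, pmass p X s = ∑ ω, p ω := by
  simpa using sum_pmass_mul p X fun _ => 1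

lemma sum_pmass_mul_of_comp [Fintype S] [Fintype T] [DecidableEq S] [DecidableEq T]
    {X : Ω → S} {Y : Ω → T} (g : S → T) (hY : ∀ ω, Y ω = g (X ω)) (φ : T → ℝ) :
    ∑ s, pmass p X s * φ (g s) = ∑ t, pmass p Y t * φ t := by
  simp only [sum_pmass_mul, hY]

lemma sum_pmass_pair_left [Fintype S] [DecidableEq S] [DecidableEq T]
    (X : Ω → S) (Y : Ω → T) (y : T) :
    ∑ x, pmass p (fun ω => (X ω, Y ω)) (x, y) = pmass p Y y := by
  unfold pmass
  rw [Finset.sum_comm]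
  refine Finset.sum_congr rfl fun ω _ => ?_
  by_cases h : Y ω = y <;> simp [Prod.ext_iff, h]

lemma ent_eq_neg_sum_mul_logb [Fintype S] [DecidableEq S] (X : Ω → S) :
    ent p X = -∑ ω, p ω * Real.logb 2 (pmass p X (X ω)) := by
  rw [ent, sum_pmass_mul p X fun s => Real.logb 2 (pmass p X s)]

variable {p}

lemma pmass_nonneg [DecidableEq S] (hp : ∀ ω, 0 ≤ p ω) (X : Ω → S) (s : S) :
    0 ≤ pmass p X s :=
  Finset.sum_nonneg fun ω _ => by split_ifs <;> simp [hp ω]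

lemma le_pmass_apply [DecidableEq S] (hp : ∀ ω, 0 ≤ p ω) (X : Ω → S) (ω : Ω) :
    p ω ≤ pmass p X (X ω) := by
  have h := Finset.single_le_sum (f := fun ω' => if X ω' = X ω then p ω' else 0)
    (fun ω' _ => by split_ifs <;> simp [hp ω']) (Finset.mem_univ ω)
  simpa [pmass] using h

lemma pmass_le_pmass_of_comp [DecidableEq S] [DecidableEq T] (hp : ∀ ω, 0 ≤ p ω)
    {X : Ω → S} {Y : Ω → T} (g : S → T) (hY : ∀ ω, Y ω = g (X ω)) (s : S) :
    pmass p X s ≤ pmass p Y (g s) :=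
  Finset.sum_le_sum fun ω _ => by
    rw [hY]
    split_ifs <;> simp_all

lemma ent_le_of_comp [Fintype S] [Fintype T] [DecidableEq S] [DecidableEq T]
    (hp : ∀ ω, 0 ≤ p ω) {X : Ω → S} {Y : Ω → T} (g : S → T) (hY : ∀ ω, Y ω = g (X ω)) :
    ent p Y ≤ ent p X := by
  rw [ent_eq_neg_sum_mul_logb, ent_eq_neg_sum_mul_logb, neg_le_neg_iff]
  refine Finset.sum_le_sum fun ω _ => ?_
  rcases (hp ω).eq_or_lt with h | h
  · simp [← h]
  refine mul_le_mul_of_nonneg_left ?_ h.le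
  rw [hY]
  exact Real.logb_le_logb_of_le one_lt_two (h.trans_le (le_pmass_apply hp X ω))
    (pmass_le_pmass_of_comp hp g hY _)

lemma ent_congr [Fintype S] [Fintype T] [DecidableEq S] [DecidableEq T]
    (hp : ∀ ω, 0 ≤ p ω) {X : Ω → S} {Y : Ω → T} (f : S → T) (g : T → S)
    (hY : ∀ ω, Y ω = f (X ω)) (hX : ∀ ω, X ω = g (Y ω)) :
    ent p X = ent p Y :=
  le_antisymm (ent_le_of_comp hp g hX) (ent_le_of_comp hp f hY)

lemma ent_pair_comm [Fintype S] [Fintype T] [DecidableEq S] [DecidableEq T]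
    (hp : ∀ ω, 0 ≤ p ω) (X : Ω → S) (Y : Ω → T) :
    ent p (fun ω => (X ω, Y ω)) = ent p (fun ω => (Y ω, X ω)) :=
  ent_congr hp Prod.swap Prod.swap (fun _ => rfl) (fun _ => rfl)

lemma ent_pair_of_indepRV [Fintype S] [Fintype T] [DecidableEq S] [DecidableEq T]
    (hp : ∀ ω, 0 ≤ p ω) {X : Ω → S} {Y : Ω → T} (h : IndepRV p X Y) :
    ent p (fun ω => (X ω, Y ω)) = ent p X + ent p Y := by
  simp only [ent_eq_neg_sum_mul_logb, ← neg_add, ← Finset.sum_add_distrib, ← mul_add]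
  congr 1
  refine Finset.sum_congr rfl fun ω _ => ?_
  rcases (hp ω).eq_or_lt with h0 | h0
  · simp [← h0]
  rw [h (X ω) (Y ω), Real.logb_mul (h0.trans_le (le_pmass_apply hp X ω)).ne'
    (h0.trans_le (le_pmass_apply hp Y ω)).ne']

lemma sum_mul_logb_le_sum_mul_logb {ι : Type*} [Fintype ι] {b : ℝ} (hb : 1 < b)
    {j q : ι → ℝ} (hj : ∀ i, 0 ≤ j i) (hq : ∀ i, 0 ≤ q i) (hjq : ∀ i, 0 < j i → 0 < q i)
    (hsum : ∑ i, q i ≤ ∑ i, j i) :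
    ∑ i, j i * Real.logb b (q i) ≤ ∑ i, j i * Real.logb b (j i) := by
  have hterm : ∀ i, j i * Real.log (q i) - j i * Real.log (j i) ≤ q i - j i := by
    intro i
    rcases (hj i).eq_or_lt with h | h
    · simp [← h, hq i]
    have hlog := Real.log_le_sub_one_of_pos (div_pos (hjq i h) h)
    rw [Real.log_div (hjq i h).ne' h.ne'] at hlog
    have hmul : j i * (q i / j i - 1) = q i - j i := by field_simp
    nlinarith [mul_le_mul_of_nonneg_left hlog h.le]
  have hlog : ∑ i, j i * Real.log (q i) ≤ ∑ i, j i * Real.log (j i) := by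
    have := Finset.sum_le_sum fun i (_ : i ∈ Finset.univ) => hterm i
    simp only [Finset.sum_sub_distrib] at this
    linarith
  simp only [Real.logb, mul_div_assoc', ← Finset.sum_div]
  exact div_le_div_of_nonneg_right hlog (Real.log_pos hb).le

lemma ent_triple_add_ent_le [Fintype S] [Fintype T] [Fintype U]
    [DecidableEq S] [DecidableEq T] [DecidableEq U]
    (hp : ∀ ω, 0 ≤ p ω) (X : Ω → S) (Y : Ω → T) (Z : Ω → U) :
    ent p (fun ω => (X ω, (Y ω, Z ω))) + ent p Z ≤
      ent p (fun ω => (X ω, Z ω)) + ent p (fun ω => (Y ω, Z ω)) := by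
  set j := pmass p (fun ω => (X ω, (Y ω, Z ω)))
  set a := pmass p (fun ω => (X ω, Z ω))
  set b := pmass p (fun ω => (Y ω, Z ω))
  set c := pmass p Z
  have hja : ∀ v : S × T × U, j v ≤ a (v.1, v.2.2) :=
    pmass_le_pmass_of_comp hp (fun v : S × T × U => (v.1, v.2.2)) fun _ => rfl
  have hjb : ∀ v : S × T × U, j v ≤ b v.2 := pmass_le_pmass_of_comp hp Prod.snd fun _ => rfl
  have hjc : ∀ v : S × T × U, j v ≤ c v.2.2 :=
    pmass_le_pmass_of_comp hp (fun v : S × T × U => v.2.2) fun _ => rfl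
  let q : S × T × U → ℝ := fun v => a (v.1, v.2.2) * b v.2 / c v.2.2
  have hq : ∀ v, 0 ≤ q v := fun v =>
    div_nonneg (mul_nonneg (pmass_nonneg hp _ _) (pmass_nonneg hp _ _)) (pmass_nonneg hp _ _)
  have hjq : ∀ v, 0 < j v → 0 < q v := fun v h =>
    div_pos (mul_pos (h.trans_le (hja v)) (h.trans_le (hjb v))) (h.trans_le (hjc v))
  have hsum : ∑ v, q v ≤ ∑ v, j v :=
    calc ∑ v, q v = ∑ w : T × U, c w.2 * b w / c w.2 := by
          rw [Fintype.sum_prod_type, Finset.sum_comm]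
          refine Finset.sum_congr rfl fun w _ => ?_
          have hac : ∑ x, a (x, w.2) = c w.2 := sum_pmass_pair_left p X Z w.2
          simp only [q]
          rw [← Finset.sum_div, ← Finset.sum_mul, hac]
      _ ≤ ∑ w, b w := Finset.sum_le_sum fun w _ => by
          rw [mul_div_right_comm]
          exact mul_le_of_le_one_left (pmass_nonneg hp _ _) (div_self_le_one _)
      _ = ∑ v, j v := by rw [sum_pmass, sum_pmass]
  have ha : ∑ v, j v * Real.logb 2 (a (v.1, v.2.2)) = ∑ w, a w * Real.logb 2 (a w) :=
    sum_pmass_mul_of_comp p (fun v : S × T × U => (v.1, v.2.2)) (by intro; rfl)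
      fun w => Real.logb 2 (a w)
  have hb : ∑ v, j v * Real.logb 2 (b v.2) = ∑ w, b w * Real.logb 2 (b w) :=
    sum_pmass_mul_of_comp p (Prod.snd : S × T × U → T × U) (by intro; rfl)
      fun w => Real.logb 2 (b w)
  have hc : ∑ v, j v * Real.logb 2 (c v.2.2) = ∑ z, c z * Real.logb 2 (c z) :=
    sum_pmass_mul_of_comp p (fun v : S × T × U => v.2.2) (by intro; rfl)
      fun z => Real.logb 2 (c z)
  have hsplit : ∑ v, j v * Real.logb 2 (q v) = ∑ v, j v * Real.logb 2 (a (v.1, v.2.2)) +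
      ∑ v, j v * Real.logb 2 (b v.2) - ∑ v, j v * Real.logb 2 (c v.2.2) := by
    rw [← Finset.sum_add_distrib, ← Finset.sum_sub_distrib]
    refine Finset.sum_congr rfl fun v _ => ?_
    have hj0 : 0 ≤ j v := pmass_nonneg hp _ v
    rcases hj0.eq_or_lt with h | h
    · rw [← h]
      ring
    rw [Real.logb_div (mul_pos (h.trans_le (hja v)) (h.trans_le (hjb v))).ne'
      (h.trans_le (hjc v)).ne', Real.logb_mul (h.trans_le (hja v)).ne' (h.trans_le (hjb v)).ne']
    ring
  have := sum_mul_logb_le_sum_mul_logb one_lt_two (pmass_nonneg hp _) hq hjq hsum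
  simp only [ent]
  linarith

end Entropy

section Information

variable {Ω S T U R : Type*} [Fintype Ω] {p : Ω → ℝ}
  [Fintype S] [Fintype T] [Fintype U] [Fintype R]
  [DecidableEq S] [DecidableEq T] [DecidableEq U] [DecidableEq R]

lemma condEnt_pair_le (hp : ∀ ω, 0 ≤ p ω) (X : Ω → S) (Y : Ω → T) (Z : Ω → U) :
    condEnt p X (fun ω => (Y ω, Z ω)) ≤ condEnt p X Z := by
  have := ent_triple_add_ent_le hp X Y Z
  unfold condEnt
  linarith

lemma condEnt_le_condEnt_add_condEnt_pair (hp : ∀ ω, 0 ≤ p ω)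
    (X : Ω → S) (Z : Ω → T) (Y : Ω → U) :
    condEnt p X Z ≤ condEnt p Y Z + condEnt p X (fun ω => (Z ω, Y ω)) := by
  have hproj : ent p (fun ω => (X ω, Z ω)) ≤ ent p (fun ω => (X ω, (Z ω, Y ω))) :=
    ent_le_of_comp hp (fun v : S × T × U => (v.1, v.2.1)) fun _ => rfl
  have hcomm := ent_pair_comm hp Y Z
  unfold condEnt
  linarith

/-- `I(X;Y) ≤ I((X,Z);Y) = I(X;Y|Z) ≤ H(X|Z)`, the equality by independence of `Z` and `Y`. -/
lemma mutInfo_le_condEnt_of_indepRV (hp : ∀ ω, 0 ≤ p ω) {X : Ω → S} {Y : Ω → T} {Z : Ω → U}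
    (h : IndepRV p Z Y) : mutInfo p X Y ≤ condEnt p X Z := by
  have hZY := ent_pair_of_indepRV hp h
  have hcond := condEnt_pair_le hp Y Z X
  have hproj : ent p (fun ω => (Z ω, Y ω)) ≤ ent p (fun ω => (Y ω, (Z ω, X ω))) :=
    ent_le_of_comp hp (fun v : T × U × S => (v.2.1, v.1)) fun _ => rfl
  have hZX := ent_pair_comm hp Z X
  have hYX := ent_pair_comm hp Y X
  unfold mutInfo
  unfold condEnt at hcond ⊢
  linarith

/-- Data processing `I(V;Z|W) ≤ I(Y;Z|W)` for `V` a function of `(W,Y)`. -/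
lemma condEnt_sub_condEnt_pair_le_of_comp (hp : ∀ ω, 0 ≤ p ω)
    {V : Ω → S} {W : Ω → T} {Y : Ω → U} (f : T × U → S) (hV : ∀ ω, V ω = f (W ω, Y ω))
    (Z : Ω → R) :
    condEnt p V W - condEnt p V (fun ω => (W ω, Z ω)) ≤
      condEnt p Z W - condEnt p Z (fun ω => (W ω, Y ω)) := by
  have hcond := condEnt_pair_le hp Z (fun ω => (W ω, Y ω)) (fun ω => (V ω, W ω))
  have hdet : ent p (fun ω => (Z ω, ((W ω, Y ω), (V ω, W ω)))) =
      ent p (fun ω => (Z ω, (W ω, Y ω))) :=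
    ent_congr hp (fun v => (v.1, v.2.1)) (fun v => (v.1, (v.2, (f v.2, v.2.1))))
      (fun _ => rfl) (fun ω => by simp [hV])
  have hdet' : ent p (fun ω => ((W ω, Y ω), (V ω, W ω))) = ent p (fun ω => (W ω, Y ω)) :=
    ent_congr hp Prod.fst (fun v => (v, (f v, v.1))) (fun _ => rfl) (fun ω => by simp [hV])
  have hperm : ent p (fun ω => (Z ω, (V ω, W ω))) = ent p (fun ω => (V ω, (W ω, Z ω))) :=
    ent_congr hp (fun v => (v.2.1, (v.2.2, v.1))) (fun v => (v.2.2, (v.1, v.2.1)))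
      (fun _ => rfl) (fun _ => rfl)
  have hcomm := ent_pair_comm hp W Z
  unfold condEnt at hcond ⊢
  linarith

end Information

/-- Claim 1 (Section V-C): with `W₁ ⊥ W₂`, `X₁ᵢ` (hence `V₁ᵢ`) a deterministic function
of `(W₁, Ỹ₁^{i−1})`, `H(Y₁^N | W₁, Ỹ₁^N) = H(V₂^N | W₁, Ỹ₁^N)`, and `V₁^N` a
deterministic function of `(W₁, Ỹ₁^{N−1})`, we have
`I(V₁^N;W₂) + H(V₂^N|W₁) − H(Y₁^N|W₁) − H(V₁^N|Y₁^N) ≤ H(Ỹ₁^N|W₁)`. -/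
theorem stmt_12 {Ω A B SV1 SV2 SY SYt : Type*} [Fintype Ω]
    [Fintype A] [Fintype B] [Fintype SV1] [Fintype SV2]
    [Fintype SY] [Fintype SYt]
    [DecidableEq A] [DecidableEq B] [DecidableEq SV1]
    [DecidableEq SV2] [DecidableEq SY] [DecidableEq SYt]
    (p : Ω → ℝ) (hp : ∀ ω, 0 ≤ p ω)
    (N : ℕ)
    (W1 : Ω → A) (W2 : Ω → B)
    (V1 : Ω → Fin N → SV1) (V2 : Ω → Fin N → SV2)
    (Y1 : Ω → Fin N → SY) (Yt1 : Ω → Fin N → SYt)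
    (hindep : IndepRV p W1 W2)
    (hHeq : condEnt p Y1 (fun ω => (W1 ω, Yt1 ω)) =
      condEnt p V2 (fun ω => (W1 ω, Yt1 ω)))
    (hV1 : ∃ f : A × (Fin (N - 1) → SYt) → (Fin N → SV1),
      ∀ ω, V1 ω = f (W1 ω, fun j : Fin (N - 1) => Yt1 ω ⟨j.1, by omega⟩)) :
    mutInfo p V1 W2 + condEnt p V2 W1 - condEnt p Y1 W1 - condEnt p V1 Y1 ≤
      condEnt p Yt1 W1 := by
  obtain ⟨f, hf⟩ := hV1
  have hI := mutInfo_le_condEnt_of_indepRV hp (X := V1) hindep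
  have hcond := condEnt_pair_le hp V1 W1 Y1
  have hchain := condEnt_le_condEnt_add_condEnt_pair hp V2 W1 Yt1
  have hdpi := condEnt_sub_condEnt_pair_le_of_comp hp
    (fun q : A × (Fin N → SYt) => f (q.1, fun j : Fin (N - 1) => q.2 ⟨j.1, by omega⟩)) hf Y1
  linarith
end

section
/- For nonnegative reals n, m, ñ, m̃, λ ∈ [0,1] with m ≥ 2n: min(2n + 2λñ, max(2n − m, m)) ≤ min(2n + 2λñ, (n − m)⁺ + max(n, m), 2·max(n − m, m) + 2λ·max(ñ, m̃)); i.e., the Type-I achievable rate is at most the outer bound, and consequently they are equal (Theorem 3, regime α ≥ 2). -/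
/-- Theorem 3, regime α ≥ 2 (m ≥ 2n): the Type-I achievable rate
`min (2n + 2λñ) (max (2n − m) m)` is at most the outer bound
`min (2n + 2λñ) (min ((n − m)⁺ + max n m) (2·max (n − m) m + 2λ·max ñ m̃))`,
and consequently the two coincide. -/
theorem stmt_16 (n m nt mt l : ℝ) (hn : 0 ≤ n) (hm : 0 ≤ m) (hnt : 0 ≤ nt) (hmt : 0 ≤ mt)
    (hl0 : 0 ≤ l) (hl1 : l ≤ 1) (h : m ≥ 2 * n) :
    min (2 * n + 2 * l * nt) (max (2 * n - m) m) ≤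
      min (2 * n + 2 * l * nt)
        (min (max (n - m) 0 + max n m) (2 * max (n - m) m + 2 * l * max nt mt)) ∧
    min (2 * n + 2 * l * nt) (max (2 * n - m) m) =
      min (2 * n + 2 * l * nt)
        (min (max (n - m) 0 + max n m) (2 * max (n - m) m + 2 * l * max nt mt)) := by
  have h1 : max (2 * n - m) m = m := max_eq_right (by linarith)
  have h2 : max (n - m) 0 = 0 := max_eq_right (by linarith)
  have h3 : max n m = m := max_eq_right (by linarith)
  have h4 : max (n - m) m = m := max_eq_right (by linarith)
  have h5 : 0 ≤ 2 * l * max nt mt := by positivity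
  rw [h1, h2, h3, h4, zero_add]
  have : min m (2 * m + 2 * l * max nt mt) = m := min_eq_left (by linarith)
  rw [this]
  exact ⟨le_refl _, rfl⟩
end
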